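/- arXiv:2508.02797 — 5 statements merged into one kernel-verified Lean document; each statement's English description precedes it below -/
import Mathlib

section
/- For every dimension d ≥ 1, every real number r ≥ 1, and all vectors x, y ∈ ℝ^d, one has (|x|^{r-1} x − |y|^{r-1} y) · (x − y) ≥ (1/2) |x|^{r-1} |x − y|^2 + (1/2) |y|^{r-1} |x − y|^2; in particular the left-hand side is nonnegative. -/
open scoped RealInnerProductSpace

/-! Polarising `⟪a • x - b • y, x - y⟫` splits it into `(a + b)/2 * ‖x - y‖²`, which is the claimed
lower bound, and `(a - b)/2 * (‖x‖² - ‖y‖²)`, which is nonnegative when `a = ‖x‖ ^ p`,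
`b = ‖y‖ ^ p` with `p ≥ 0`, because `t ↦ t ^ p` and `t ↦ t²` are both monotone on `[0, ∞)`. -/

variable {E : Type*} [NormedAddCommGroup E] [InnerProductSpace ℝ E]

lemma inner_smul_sub_smul_sub_eq (a b : ℝ) (x y : E) :
    ⟪a • x - b • y, x - y⟫ =
      (a + b) / 2 * ‖x - y‖ ^ 2 + (a - b) / 2 * (‖x‖ ^ 2 - ‖y‖ ^ 2) := by
  rw [norm_sub_sq_real, inner_sub_left, inner_sub_right, inner_sub_right, real_inner_smul_left,
    real_inner_smul_left, real_inner_smul_left, real_inner_smul_left,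
    real_inner_self_eq_norm_sq, real_inner_self_eq_norm_sq, real_inner_comm y x]
  ring

lemma Real.rpow_sub_rpow_mul_sq_sub_sq_nonneg {s t p : ℝ} (hs : 0 ≤ s) (ht : 0 ≤ t)
    (hp : 0 ≤ p) : 0 ≤ (s ^ p - t ^ p) * (s ^ 2 - t ^ 2) := by
  rcases le_total s t with hst | hts
  · exact mul_nonneg_of_nonpos_of_nonpos
      (sub_nonpos.2 (Real.rpow_le_rpow hs hst hp)) (sub_nonpos.2 (pow_le_pow_left₀ hs hst 2))
  · exact mul_nonneg
      (sub_nonneg.2 (Real.rpow_le_rpow ht hts hp)) (sub_nonneg.2 (pow_le_pow_left₀ ht hts 2))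

lemma inner_rpow_norm_smul_sub_ge {p : ℝ} (hp : 0 ≤ p) (x y : E) :
    (1 / 2) * ‖x‖ ^ p * ‖x - y‖ ^ 2 + (1 / 2) * ‖y‖ ^ p * ‖x - y‖ ^ 2 ≤
      ⟪‖x‖ ^ p • x - ‖y‖ ^ p • y, x - y⟫ := by
  have hsign := Real.rpow_sub_rpow_mul_sq_sub_sq_nonneg (norm_nonneg x) (norm_nonneg y) hp
  rw [inner_smul_sub_smul_sub_eq]
  linarith

theorem forchheimer_pointwise_monotonicity_general
    (d : ℕ) (r : ℝ) (hr : 1 ≤ r)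
    (x y : EuclideanSpace ℝ (Fin d)) :
    ⟪‖x‖ ^ (r - 1) • x - ‖y‖ ^ (r - 1) • y, x - y⟫ ≥
      (1 / 2) * ‖x‖ ^ (r - 1) * ‖x - y‖ ^ 2 + (1 / 2) * ‖y‖ ^ (r - 1) * ‖x - y‖ ^ 2 ∧
    0 ≤ ⟪‖x‖ ^ (r - 1) • x - ‖y‖ ^ (r - 1) • y, x - y⟫ := by
  have hp : 0 ≤ r - 1 := sub_nonneg.2 hr
  have hbound := inner_rpow_norm_smul_sub_ge hp x y
  exact ⟨hbound, le_trans (by positivity) hbound⟩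

/-- Pointwise monotonicity inequality for the Forchheimer nonlinearity
`x ↦ |x|^{r-1} x` on Euclidean space; in particular the left-hand side is nonnegative. -/
theorem forchheimer_pointwise_monotonicity
    (d : ℕ) (hd : 1 ≤ d) (r : ℝ) (hr : 1 ≤ r)
    (x y : EuclideanSpace ℝ (Fin d)) :
    ⟪‖x‖ ^ (r - 1) • x - ‖y‖ ^ (r - 1) • y, x - y⟫ ≥
      (1 / 2) * ‖x‖ ^ (r - 1) * ‖x - y‖ ^ 2 + (1 / 2) * ‖y‖ ^ (r - 1) * ‖x - y‖ ^ 2 ∧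
    0 ≤ ⟪‖x‖ ^ (r - 1) • x - ‖y‖ ^ (r - 1) • y, x - y⟫ :=
  forchheimer_pointwise_monotonicity_general d r hr x y
end

section
/- For every dimension d ≥ 1, every real number r ≥ 1, and all vectors x, y ∈ ℝ^d, one has (|x|^{r-1} x − |y|^{r-1} y) · (x − y) ≥ (1/2^{r-1}) |x − y|^{r+1}. -/
open scoped RealInnerProductSpace

/-!
Write `a = ‖x‖`, `b = ‖y‖`, `c = ‖x - y‖`, `A = a ^ (r - 1)`, `B = b ^ (r - 1)`. Polarization gives
`⟪A • x - B • y, x - y⟫ = (A - B) (a² - b²) / 2 + (A + B) c² / 2`, where the first term is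
nonnegative. Since `c ≤ a + b`, we have `c ^ (r + 1) ≤ (a + b) ^ (r - 1) c²`, so it suffices to bound an
affine function of `c²` on `[0, (a + b)²]`. At `c² = 0` this is the nonnegativity of the first term;
at `c² = (a + b)²` the right-hand side equals `(a + b) (a ^ r + b ^ r)`, and the bound is the
convexity inequality `(a + b) ^ r ≤ 2 ^ (r - 1) (a ^ r + b ^ r)`.
-/

namespace Real

lemma rpow_add_le_mul_rpow_add_rpow {a b p : ℝ} (ha : 0 ≤ a) (hb : 0 ≤ b) (hp : 1 ≤ p) :
    (a + b) ^ p ≤ 2 ^ (p - 1) * (a ^ p + b ^ p) := by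
  lift a to NNReal using ha
  lift b to NNReal using hb
  exact_mod_cast NNReal.rpow_add_le_mul_rpow_add_rpow a b hp

lemma rpow_sub_rpow_mul_sq_sub_sq_nonneg_s1 {a b p : ℝ} (ha : 0 ≤ a) (hb : 0 ≤ b) (hp : 0 ≤ p) :
    0 ≤ (a ^ p - b ^ p) * (a ^ 2 - b ^ 2) := by
  rcases le_total a b with hab | hab
  · exact mul_nonneg_of_nonpos_of_nonpos (sub_nonpos.2 (rpow_le_rpow ha hab hp))
      (sub_nonpos.2 (pow_le_pow_left₀ ha hab 2))
  · exact mul_nonneg (sub_nonneg.2 (rpow_le_rpow hb hab hp))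
      (sub_nonneg.2 (pow_le_pow_left₀ hb hab 2))

end Real

lemma mul_le_add_mul_of_mul_le_add_mul {m u v t T : ℝ} (hu : 0 ≤ u) (ht : 0 ≤ t) (htT : t ≤ T)
    (hT : m * T ≤ u + v * T) : m * t ≤ u + v * t := by
  rcases le_total m v with hmv | hvm <;> nlinarith

lemma inner_smul_sub_smul_sub_self {E : Type*} [NormedAddCommGroup E] [InnerProductSpace ℝ E]
    (α β : ℝ) (x y : E) :
    ⟪α • x - β • y, x - y⟫ =
      (α - β) * (‖x‖ ^ 2 - ‖y‖ ^ 2) / 2 + (α + β) * ‖x - y‖ ^ 2 / 2 := by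
  simp only [inner_sub_left, inner_sub_right, real_inner_smul_left, real_inner_self_eq_norm_sq,
    real_inner_comm x y, norm_sub_sq_real]
  ring

lemma rpow_add_one_le_two_rpow_mul {r a b c : ℝ} (hr : 1 ≤ r) (ha : 0 ≤ a) (hb : 0 ≤ b)
    (hc : 0 ≤ c) (hcab : c ≤ a + b) :
    c ^ (r + 1) ≤ 2 ^ (r - 1) * ((a ^ (r - 1) - b ^ (r - 1)) * (a ^ 2 - b ^ 2) / 2
      + (a ^ (r - 1) + b ^ (r - 1)) * c ^ 2 / 2) := by
  have hab : 0 ≤ a + b := add_nonneg ha hb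
  have rpow_add_sq {s : ℝ} (hs : 0 ≤ s) : s ^ (r + 1) = s ^ (r - 1) * s ^ 2 := by
    rw [← Real.rpow_two, ← Real.rpow_add' hs (by linarith)]; ring_nf
  have rpow_eq_rpow_sub_one_mul {s : ℝ} (hs : 0 ≤ s) : s ^ r = s ^ (r - 1) * s := by
    rw [← Real.rpow_add_one' hs (by linarith), sub_add_cancel]
  have hc_le : c ^ (r + 1) ≤ (a + b) ^ (r - 1) * c ^ 2 := by
    rw [rpow_add_sq hc]
    exact mul_le_mul_of_nonneg_right (Real.rpow_le_rpow hc hcab (by linarith)) (sq_nonneg c)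
  have h_endpoint : (a + b) ^ (r - 1) * (a + b) ^ 2 ≤
      2 ^ (r - 1) * ((a ^ (r - 1) - b ^ (r - 1)) * (a ^ 2 - b ^ 2) / 2)
        + 2 ^ (r - 1) * ((a ^ (r - 1) + b ^ (r - 1)) / 2) * (a + b) ^ 2 := by
    calc (a + b) ^ (r - 1) * (a + b) ^ 2 = (a + b) ^ r * (a + b) := by
          rw [← rpow_add_sq hab, Real.rpow_add_one' hab (by linarith)]
      _ ≤ 2 ^ (r - 1) * (a ^ r + b ^ r) * (a + b) :=
          mul_le_mul_of_nonneg_right (Real.rpow_add_le_mul_rpow_add_rpow ha hb hr) hab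
      _ = _ := by rw [rpow_eq_rpow_sub_one_mul ha, rpow_eq_rpow_sub_one_mul hb]; ring
  have h_affine := mul_le_add_mul_of_mul_le_add_mul
    (mul_nonneg (by positivity) (div_nonneg
      (Real.rpow_sub_rpow_mul_sq_sub_sq_nonneg_s1 ha hb (by linarith)) zero_le_two))
    (sq_nonneg c) (pow_le_pow_left₀ hc hcab 2) h_endpoint
  linarith

theorem forchheimer_pointwise_strong_monotonicity_general
    (d : ℕ) (r : ℝ) (hr : 1 ≤ r)
    (x y : EuclideanSpace ℝ (Fin d)) :
    ⟪‖x‖ ^ (r - 1) • x - ‖y‖ ^ (r - 1) • y, x - y⟫ ≥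
      (1 / 2 ^ (r - 1)) * ‖x - y‖ ^ (r + 1) := by
  rw [ge_iff_le, inner_smul_sub_smul_sub_self, one_div, inv_mul_le_iff₀ (by positivity)]
  exact rpow_add_one_le_two_rpow_mul hr (norm_nonneg x) (norm_nonneg y) (norm_nonneg (x - y))
    (norm_sub_le x y)

/-- Pointwise strong monotonicity inequality for the Forchheimer nonlinearity
`x ↦ |x|^{r-1} x` on Euclidean space. -/
theorem forchheimer_pointwise_strong_monotonicity
    (d : ℕ) (hd : 1 ≤ d) (r : ℝ) (hr : 1 ≤ r)
    (x y : EuclideanSpace ℝ (Fin d)) :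
    ⟪‖x‖ ^ (r - 1) • x - ‖y‖ ^ (r - 1) • y, x - y⟫ ≥
      (1 / 2 ^ (r - 1)) * ‖x - y‖ ^ (r + 1) :=
  forchheimer_pointwise_strong_monotonicity_general d r hr x y
end

section
/- Let O ⊆ ℝ^d be a Lebesgue-measurable set, let r ≥ 1 be a real number, and let u, v ∈ L^{r+1}(O;ℝ^d). Then the function x ↦ (|u(x)|^{r-1} u(x) − |v(x)|^{r-1} v(x)) · (u(x) − v(x)) is integrable on O and ∫_O (|u|^{r-1} u − |v|^{r-1} v) · (u − v) dx ≥ (1/2) ∫_O |u|^{r-1} |u − v|^2 dx + (1/2) ∫_O |v|^{r-1} |u − v|^2 dx; in particular the left-hand side is nonnegative. -/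
/-!
With `p = r - 1`, `x = ‖a‖`, `y = ‖b‖` one has the identity
`⟪x^p • a - y^p • b, a - b⟫ = ½ (x^p + y^p) ‖a - b‖² + ½ (x^p - y^p)(x² - y²)`,
whose last term is nonnegative because `t ↦ t^p` and `t ↦ t²` are both monotone on `[0, ∞)`.
For integrability, the rearrangement inequality bounds the integrand by
`2 (‖u‖^(p+2) + ‖v‖^(p+2))`, integrable for `u, v ∈ L^(p+2)`; by the pointwise inequality the
nonnegative weights `‖u‖^p ‖u - v‖²` and `‖v‖^p ‖u - v‖²` are dominated by twice the integrand.
-/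

open scoped RealInnerProductSpace
open MeasureTheory

theorem norm_rpow_norm_smul_self {E : Type*} [SeminormedAddCommGroup E] [NormedSpace ℝ E]
    {p : ℝ} (hp : p + 1 ≠ 0) (a : E) : ‖‖a‖ ^ p • a‖ = ‖a‖ ^ (p + 1) := by
  rw [norm_smul, Real.norm_of_nonneg (by positivity), Real.rpow_add_one' (norm_nonneg a) hp]

theorem MeasureTheory.MemLp.integrable_norm_rpow_add_two {α E : Type*} [MeasurableSpace α]
    {μ : Measure α} [NormedAddCommGroup E] {u : α → E} {p : ℝ} (hp : 0 ≤ p)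
    (hu : MemLp u (ENNReal.ofReal (p + 2)) μ) : Integrable (fun x => ‖u x‖ ^ (p + 2)) μ := by
  have h := hu.integrable_norm_rpow (ENNReal.ofReal_pos.2 (by linarith)).ne'
    ENNReal.ofReal_ne_top
  rwa [ENNReal.toReal_ofReal (by linarith)] at h

section

variable {E : Type*} [NormedAddCommGroup E] [InnerProductSpace ℝ E]

theorem inner_rpow_smul_sub_rpow_smul_eq (p : ℝ) (a b : E) :
    ⟪‖a‖ ^ p • a - ‖b‖ ^ p • b, a - b⟫ =
      (1 / 2) * ((‖a‖ ^ p + ‖b‖ ^ p) * ‖a - b‖ ^ 2) +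
        (1 / 2) * ((‖a‖ ^ p - ‖b‖ ^ p) * (‖a‖ ^ 2 - ‖b‖ ^ 2)) := by
  rw [norm_sub_sq_real]
  simp only [inner_sub_left, inner_sub_right, real_inner_smul_left,
    real_inner_self_eq_norm_sq, real_inner_comm b a]
  ring

theorem half_mul_add_half_mul_le_inner_rpow_smul_sub {p : ℝ} (hp : 0 ≤ p) (a b : E) :
    (1 / 2) * (‖a‖ ^ p * ‖a - b‖ ^ 2) + (1 / 2) * (‖b‖ ^ p * ‖a - b‖ ^ 2) ≤
      ⟪‖a‖ ^ p • a - ‖b‖ ^ p • b, a - b⟫ := by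
  have hmono : 0 ≤ (‖a‖ ^ p - ‖b‖ ^ p) * (‖a‖ ^ 2 - ‖b‖ ^ 2) :=
    ((Real.monotoneOn_rpow_Ici_of_exponent_nonneg hp).monovaryOn
      (pow_left_monotoneOn (n := 2))).sub_mul_sub_nonneg (norm_nonneg b) (norm_nonneg a)
  rw [inner_rpow_smul_sub_rpow_smul_eq]
  linarith

theorem abs_inner_rpow_smul_sub_rpow_smul_le {p : ℝ} (hp : 0 ≤ p) (a b : E) :
    |⟪‖a‖ ^ p • a - ‖b‖ ^ p • b, a - b⟫| ≤ 2 * (‖a‖ ^ (p + 2) + ‖b‖ ^ (p + 2)) := by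
  have hrearrange : ‖a‖ ^ (p + 1) * ‖b‖ + ‖b‖ ^ (p + 1) * ‖a‖ ≤
      ‖a‖ ^ (p + 1) * ‖a‖ + ‖b‖ ^ (p + 1) * ‖b‖ :=
    ((Real.monotoneOn_rpow_Ici_of_exponent_nonneg (by linarith : 0 ≤ p + 1)).monovaryOn
      monotoneOn_id).mul_add_mul_le_mul_add_mul (norm_nonneg a) (norm_nonneg b)
  have hpow (t : ℝ) (ht : 0 ≤ t) : t ^ (p + 1) * t = t ^ (p + 2) := by
    rw [← Real.rpow_add_one' ht (by linarith)]
    ring_nf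
  calc |⟪‖a‖ ^ p • a - ‖b‖ ^ p • b, a - b⟫|
      ≤ ‖‖a‖ ^ p • a - ‖b‖ ^ p • b‖ * ‖a - b‖ := abs_real_inner_le_norm _ _
    _ ≤ (‖a‖ ^ (p + 1) + ‖b‖ ^ (p + 1)) * (‖a‖ + ‖b‖) := by
      have hp1 : p + 1 ≠ 0 := by linarith
      rw [← norm_rpow_norm_smul_self hp1 a, ← norm_rpow_norm_smul_self hp1 b]
      gcongr <;> exact norm_sub_le _ _
    _ ≤ 2 * (‖a‖ ^ (p + 1) * ‖a‖ + ‖b‖ ^ (p + 1) * ‖b‖) := by linarith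
    _ = 2 * (‖a‖ ^ (p + 2) + ‖b‖ ^ (p + 2)) := by
      rw [hpow _ (norm_nonneg a), hpow _ (norm_nonneg b)]

variable {α : Type*} [MeasurableSpace α] {μ : Measure α} {u v : α → E} {p : ℝ}

theorem integrable_inner_rpow_smul_sub_rpow_smul (hp : 0 ≤ p)
    (hu : MemLp u (ENNReal.ofReal (p + 2)) μ) (hv : MemLp v (ENNReal.ofReal (p + 2)) μ) :
    Integrable (fun x => ⟪‖u x‖ ^ p • u x - ‖v x‖ ^ p • v x, u x - v x⟫) μ := by
  have hum := hu.aestronglyMeasurable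
  have hvm := hv.aestronglyMeasurable
  refine (((hu.integrable_norm_rpow_add_two hp).add
    (hv.integrable_norm_rpow_add_two hp)).const_mul 2).mono' (by fun_prop (disch := assumption))
    (ae_of_all _ fun x => ?_)
  exact abs_inner_rpow_smul_sub_rpow_smul_le hp (u x) (v x)

theorem integrable_rpow_norm_mul_norm_sub_sq (hp : 0 ≤ p)
    (hu : MemLp u (ENNReal.ofReal (p + 2)) μ) (hv : MemLp v (ENNReal.ofReal (p + 2)) μ) :
    Integrable (fun x => ‖u x‖ ^ p * ‖u x - v x‖ ^ 2) μ := by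
  have hum := hu.aestronglyMeasurable
  have hvm := hv.aestronglyMeasurable
  refine ((integrable_inner_rpow_smul_sub_rpow_smul hp hu hv).const_mul 2).mono'
    (by fun_prop (disch := assumption)) (ae_of_all _ fun x => ?_)
  have hle := half_mul_add_half_mul_le_inner_rpow_smul_sub hp (u x) (v x)
  have hv_term : 0 ≤ ‖v x‖ ^ p * ‖u x - v x‖ ^ 2 := by positivity
  rw [Real.norm_of_nonneg (by positivity)]
  linarith

theorem half_mul_integral_add_half_mul_integral_le_integral_inner (hp : 0 ≤ p)
    (hu : MemLp u (ENNReal.ofReal (p + 2)) μ) (hv : MemLp v (ENNReal.ofReal (p + 2)) μ) :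
    (1 / 2) * (∫ x, ‖u x‖ ^ p * ‖u x - v x‖ ^ 2 ∂μ) +
        (1 / 2) * (∫ x, ‖v x‖ ^ p * ‖u x - v x‖ ^ 2 ∂μ) ≤
      ∫ x, ⟪‖u x‖ ^ p • u x - ‖v x‖ ^ p • v x, u x - v x⟫ ∂μ := by
  have hV' : Integrable (fun x => ‖v x‖ ^ p * ‖u x - v x‖ ^ 2) μ := by
    simpa only [norm_sub_rev] using integrable_rpow_norm_mul_norm_sub_sq hp hv hu
  have hU := (integrable_rpow_norm_mul_norm_sub_sq hp hu hv).const_mul (1 / 2)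
  have hV := hV'.const_mul (1 / 2)
  rw [← integral_const_mul, ← integral_const_mul, ← integral_add hU hV]
  exact integral_mono (hU.add hV) (integrable_inner_rpow_smul_sub_rpow_smul hp hu hv)
    fun x => half_mul_add_half_mul_le_inner_rpow_smul_sub hp (u x) (v x)

end

theorem forchheimer_integral_monotonicity_general
    (d : ℕ) (O : Set (EuclideanSpace ℝ (Fin d)))
    (r : ℝ) (hr : 1 ≤ r)
    (u v : EuclideanSpace ℝ (Fin d) → EuclideanSpace ℝ (Fin d))
    (hu : MemLp u (ENNReal.ofReal (r + 1)) (volume.restrict O))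
    (hv : MemLp v (ENNReal.ofReal (r + 1)) (volume.restrict O)) :
    IntegrableOn
      (fun x => ⟪‖u x‖ ^ (r - 1) • u x - ‖v x‖ ^ (r - 1) • v x, u x - v x⟫) O ∧
    (∫ x in O, ⟪‖u x‖ ^ (r - 1) • u x - ‖v x‖ ^ (r - 1) • v x, u x - v x⟫) ≥
      (1 / 2) * (∫ x in O, ‖u x‖ ^ (r - 1) * ‖u x - v x‖ ^ 2) +
      (1 / 2) * (∫ x in O, ‖v x‖ ^ (r - 1) * ‖u x - v x‖ ^ 2) ∧
    0 ≤ ∫ x in O, ⟪‖u x‖ ^ (r - 1) • u x - ‖v x‖ ^ (r - 1) • v x, u x - v x⟫ := by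
  have hp : 0 ≤ r - 1 := by linarith
  rw [show r + 1 = r - 1 + 2 by ring] at hu hv
  have hle := half_mul_integral_add_half_mul_integral_le_integral_inner hp hu hv
  have hU : 0 ≤ ∫ x in O, ‖u x‖ ^ (r - 1) * ‖u x - v x‖ ^ 2 :=
    integral_nonneg fun x => by positivity
  have hV : 0 ≤ ∫ x in O, ‖v x‖ ^ (r - 1) * ‖u x - v x‖ ^ 2 :=
    integral_nonneg fun x => by positivity
  exact ⟨integrable_inner_rpow_smul_sub_rpow_smul hp hu hv, hle, by linarith⟩

/-- Integrated monotonicity inequality for the Forchheimer nonlinearity on a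
measurable set `O`, for `u, v ∈ L^{r+1}(O; ℝ^d)`; in particular the left-hand
side is nonnegative. -/
theorem forchheimer_integral_monotonicity
    (d : ℕ) (O : Set (EuclideanSpace ℝ (Fin d))) (hO : MeasurableSet O)
    (r : ℝ) (hr : 1 ≤ r)
    (u v : EuclideanSpace ℝ (Fin d) → EuclideanSpace ℝ (Fin d))
    (hu : MemLp u (ENNReal.ofReal (r + 1)) (volume.restrict O))
    (hv : MemLp v (ENNReal.ofReal (r + 1)) (volume.restrict O)) :
    IntegrableOn
      (fun x => ⟪‖u x‖ ^ (r - 1) • u x - ‖v x‖ ^ (r - 1) • v x, u x - v x⟫) O ∧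
    (∫ x in O, ⟪‖u x‖ ^ (r - 1) • u x - ‖v x‖ ^ (r - 1) • v x, u x - v x⟫) ≥
      (1 / 2) * (∫ x in O, ‖u x‖ ^ (r - 1) * ‖u x - v x‖ ^ 2) +
      (1 / 2) * (∫ x in O, ‖v x‖ ^ (r - 1) * ‖u x - v x‖ ^ 2) ∧
    0 ≤ ∫ x in O, ⟪‖u x‖ ^ (r - 1) • u x - ‖v x‖ ^ (r - 1) • v x, u x - v x⟫ :=
  forchheimer_integral_monotonicity_general d O r hr u v hu hv
end

section
/- Let O ⊆ ℝ^d be a Lebesgue-measurable set, let r ≥ 1 be a real number, and let u, v ∈ L^{r+1}(O;ℝ^d). Then ∫_O (|u|^{r-1} u − |v|^{r-1} v) · (u − v) dx ≥ (1/2^{r-1}) ‖u − v‖_{L^{r+1}(O)}^{r+1}. -/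
/-!
Writing `x = ‖a‖`, `y = ‖b‖` and `t = ‖a - b‖²`, the pairing `⟪‖a‖^(r-1) a - ‖b‖^(r-1) b, a - b⟫`
is affine in `t`, while `2^(1-r) ‖a - b‖^(r+1) = 2^(1-r) t^((r+1)/2)` is convex in `t`. Since
`t` ranges over `[(x - y)², (x + y)²]`, it suffices to compare them at the two endpoints, where
`a` and `b` are collinear: there the inequality is superadditivity of `s ↦ s^r` and the power
mean inequality `(x + y)^r ≤ 2^(r-1) (x^r + y^r)`. Integrating the pointwise bound gives the
theorem; the pairing is integrable because it is dominated by `2 (‖u‖ + ‖v‖)^(r+1)`.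
-/

open scoped RealInnerProductSpace
open MeasureTheory

namespace Real

lemma rpow_sub_one_mul_self {x r : ℝ} (hx : 0 ≤ x) (hr : r ≠ 0) : x ^ (r - 1) * x = x ^ r := by
  rw [← rpow_add_one' hx (by simpa using hr), sub_add_cancel]

lemma sq_rpow_half (z p : ℝ) : (z ^ 2) ^ (p / 2) = |z| ^ p := by
  rw [← sq_abs, ← rpow_natCast_mul (abs_nonneg z), Nat.cast_ofNat, mul_div_cancel₀ p two_ne_zero]

lemma two_rpow_one_sub_mul_add_rpow_le {x y r : ℝ} (hx : 0 ≤ x) (hy : 0 ≤ y) (hr : 1 ≤ r) :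
    2 ^ (1 - r) * (x + y) ^ r ≤ x ^ r + y ^ r := by
  lift x to NNReal using hx
  lift y to NNReal using hy
  have hmean : ((x : ℝ) + y) ^ r ≤ 2 ^ (r - 1) * ((x : ℝ) ^ r + (y : ℝ) ^ r) := by
    exact_mod_cast NNReal.rpow_add_le_mul_rpow_add_rpow x y hr
  rwa [← neg_sub, rpow_neg zero_le_two, inv_mul_le_iff₀ (by positivity)]

lemma abs_sub_rpow_add_one_le {x y r : ℝ} (hx : 0 ≤ x) (hy : 0 ≤ y) (hr : 1 ≤ r) :
    |x - y| ^ (r + 1) ≤ (x ^ r - y ^ r) * (x - y) := by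
  wlog hyx : y ≤ x generalizing x y
  · have := this hy hx (le_of_not_ge hyx)
    rwa [abs_sub_comm, ← neg_mul_neg, neg_sub, neg_sub]
  have hxy : 0 ≤ x - y := sub_nonneg.2 hyx
  have hsuper : (x - y) ^ r + y ^ r ≤ x ^ r := by
    simpa using add_rpow_le_rpow_add hxy hy hr
  rw [abs_of_nonneg hxy, rpow_add_one' hxy (by linarith)]
  exact mul_le_mul_of_nonneg_right (by linarith) hxy

lemma two_rpow_one_sub_mul_rpow_le_of_mem_Icc {x y r t : ℝ} (hx : 0 ≤ x) (hy : 0 ≤ y)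
    (hr : 1 ≤ r) (ht : t ∈ Set.Icc ((x - y) ^ 2) ((x + y) ^ 2)) :
    2 ^ (1 - r) * t ^ ((r + 1) / 2) ≤
      (x ^ (r - 1) - y ^ (r - 1)) * (x ^ 2 - y ^ 2) / 2 + (x ^ (r - 1) + y ^ (r - 1)) * t / 2 := by
  set A := (x ^ (r - 1) + y ^ (r - 1)) / 2
  set C := (x ^ (r - 1) - y ^ (r - 1)) * (x ^ 2 - y ^ 2) / 2
  have hA : 0 ≤ A := by positivity
  have hconvex : ConvexOn ℝ (Set.Ici 0) fun s => 2 ^ (1 - r) * s ^ ((r + 1) / 2) - (A * s + C) :=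
    ((convexOn_rpow (by linarith)).smul (by positivity)).sub
      (((concaveOn_id (convex_Ici 0)).smul hA).add_const C)
  have hxr := rpow_sub_one_mul_self hx (by linarith : r ≠ 0)
  have hyr := rpow_sub_one_mul_self hy (by linarith : r ≠ 0)
  have h2 : (2 : ℝ) ^ (1 - r) ≤ 1 := rpow_le_one_of_one_le_of_nonpos one_le_two (by linarith)
  have hleft : 2 ^ (1 - r) * ((x - y) ^ 2) ^ ((r + 1) / 2) ≤ A * (x - y) ^ 2 + C := by
    have hcollinear : A * (x - y) ^ 2 + C = (x ^ r - y ^ r) * (x - y) := by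
      rw [← hxr, ← hyr]; ring
    rw [sq_rpow_half, hcollinear]
    calc 2 ^ (1 - r) * |x - y| ^ (r + 1) ≤ |x - y| ^ (r + 1) :=
          mul_le_of_le_one_left (by positivity) h2
      _ ≤ _ := abs_sub_rpow_add_one_le hx hy hr
  have hright : 2 ^ (1 - r) * ((x + y) ^ 2) ^ ((r + 1) / 2) ≤ A * (x + y) ^ 2 + C := by
    have hcollinear : A * (x + y) ^ 2 + C = (x ^ r + y ^ r) * (x + y) := by
      rw [← hxr, ← hyr]; ring
    rw [sq_rpow_half, abs_of_nonneg (by positivity), rpow_add_one' (by positivity) (by linarith),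
      hcollinear, ← mul_assoc]
    exact mul_le_mul_of_nonneg_right (two_rpow_one_sub_mul_add_rpow_le hx hy hr) (by positivity)
  have hmax := hconvex.le_on_segment (sq_nonneg (x - y)) (sq_nonneg (x + y))
    (Icc_subset_segment ht)
  have hbound := sub_nonpos.1 (hmax.trans (max_le (sub_nonpos.2 hleft) (sub_nonpos.2 hright)))
  exact hbound.trans_eq (by ring)

end Real

section InnerProductSpace

variable {E : Type*} [NormedAddCommGroup E] [InnerProductSpace ℝ E]

lemma inner_rpow_smul_sub_rpow_smul (s : ℝ) (a b : E) :
    ⟪‖a‖ ^ s • a - ‖b‖ ^ s • b, a - b⟫ =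
      (‖a‖ ^ s - ‖b‖ ^ s) * (‖a‖ ^ 2 - ‖b‖ ^ 2) / 2 + (‖a‖ ^ s + ‖b‖ ^ s) * ‖a - b‖ ^ 2 / 2 := by
  have hab : ⟪a, b⟫ = (‖a‖ ^ 2 + ‖b‖ ^ 2 - ‖a - b‖ ^ 2) / 2 := by
    rw [norm_sub_sq_real]; ring
  rw [inner_sub_left, real_inner_smul_left, real_inner_smul_left, inner_sub_right, inner_sub_right,
    real_inner_self_eq_norm_sq, real_inner_self_eq_norm_sq, real_inner_comm a b, hab]
  ring

lemma two_rpow_one_sub_mul_norm_sub_rpow_le_inner {r : ℝ} (hr : 1 ≤ r) (a b : E) :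
    2 ^ (1 - r) * ‖a - b‖ ^ (r + 1) ≤ ⟪‖a‖ ^ (r - 1) • a - ‖b‖ ^ (r - 1) • b, a - b⟫ := by
  have ht : ‖a - b‖ ^ 2 ∈ Set.Icc ((‖a‖ - ‖b‖) ^ 2) ((‖a‖ + ‖b‖) ^ 2) :=
    ⟨sq_le_sq.2 ((abs_norm_sub_norm_le a b).trans_eq (abs_norm _).symm),
     pow_le_pow_left₀ (norm_nonneg _) (norm_sub_le a b) 2⟩
  have hscalar := Real.two_rpow_one_sub_mul_rpow_le_of_mem_Icc (norm_nonneg a) (norm_nonneg b) hr ht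
  rwa [Real.sq_rpow_half, abs_norm, ← inner_rpow_smul_sub_rpow_smul] at hscalar

lemma norm_rpow_sub_one_smul_self {r : ℝ} (hr : r ≠ 0) (c : E) : ‖‖c‖ ^ (r - 1) • c‖ = ‖c‖ ^ r := by
  rw [norm_smul, Real.norm_of_nonneg (by positivity), Real.rpow_sub_one_mul_self (norm_nonneg c) hr]

lemma norm_inner_rpow_smul_sub_le {r : ℝ} (hr : 1 ≤ r) (a b : E) :
    ‖⟪‖a‖ ^ (r - 1) • a - ‖b‖ ^ (r - 1) • b, a - b⟫‖ ≤ 2 * (‖a‖ + ‖b‖) ^ (r + 1) := by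
  have hr0 : r ≠ 0 := by linarith
  have hsmul (c : E) (hc : ‖c‖ ≤ ‖a‖ + ‖b‖) : ‖‖c‖ ^ (r - 1) • c‖ ≤ (‖a‖ + ‖b‖) ^ r := by
    rw [norm_rpow_sub_one_smul_self hr0]
    exact Real.rpow_le_rpow (norm_nonneg c) hc (by linarith)
  calc ‖⟪‖a‖ ^ (r - 1) • a - ‖b‖ ^ (r - 1) • b, a - b⟫‖
      ≤ ‖‖a‖ ^ (r - 1) • a - ‖b‖ ^ (r - 1) • b‖ * ‖a - b‖ := norm_inner_le_norm _ _
    _ ≤ (‖‖a‖ ^ (r - 1) • a‖ + ‖‖b‖ ^ (r - 1) • b‖) * (‖a‖ + ‖b‖) :=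
        mul_le_mul (norm_sub_le _ _) (norm_sub_le a b) (norm_nonneg _) (by positivity)
    _ ≤ ((‖a‖ + ‖b‖) ^ r + (‖a‖ + ‖b‖) ^ r) * (‖a‖ + ‖b‖) := by
        gcongr
        · exact hsmul a (le_add_of_nonneg_right (norm_nonneg b))
        · exact hsmul b (le_add_of_nonneg_left (norm_nonneg a))
    _ = 2 * (‖a‖ + ‖b‖) ^ (r + 1) := by
        rw [Real.rpow_add_one' (by positivity) (by linarith)]; ring

end InnerProductSpace

namespace MeasureTheory

variable {α E : Type*} [MeasurableSpace α] {μ : Measure α}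

lemma MemLp.integrable_norm_rpow_of_ofReal [NormedAddCommGroup E] {p : ℝ} (hp : 0 < p) {f : α → E}
    (hf : MemLp f (ENNReal.ofReal p) μ) : Integrable (fun x => ‖f x‖ ^ p) μ := by
  simpa [ENNReal.toReal_ofReal hp.le] using
    hf.integrable_norm_rpow (by simpa using hp) ENNReal.ofReal_ne_top

variable [NormedAddCommGroup E] [InnerProductSpace ℝ E] {r : ℝ} {u v : α → E}

lemma integrable_inner_rpow_smul_sub (hr : 1 ≤ r) (hu : MemLp u (ENNReal.ofReal (r + 1)) μ)
    (hv : MemLp v (ENNReal.ofReal (r + 1)) μ) :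
    Integrable (fun x => ⟪‖u x‖ ^ (r - 1) • u x - ‖v x‖ ^ (r - 1) • v x, u x - v x⟫) μ := by
  have hcont : Continuous fun c : E => ‖c‖ ^ (r - 1) • c :=
    ((Real.continuous_rpow_const (by linarith)).comp continuous_norm).smul continuous_id
  have hmeas := ((hcont.comp_aestronglyMeasurable hu.1).sub
    (hcont.comp_aestronglyMeasurable hv.1)).inner (𝕜 := ℝ) (hu.1.sub hv.1)
  have hdom := ((hu.norm.add hv.norm).integrable_norm_rpow_of_ofReal (by linarith)).const_mul 2
  refine hdom.mono' hmeas (ae_of_all _ fun x => ?_)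
  simpa [Real.norm_of_nonneg (add_nonneg (norm_nonneg (u x)) (norm_nonneg (v x)))] using
    norm_inner_rpow_smul_sub_le hr (u x) (v x)

theorem two_rpow_one_sub_mul_integral_le_integral_inner (hr : 1 ≤ r)
    (hu : MemLp u (ENNReal.ofReal (r + 1)) μ) (hv : MemLp v (ENNReal.ofReal (r + 1)) μ) :
    2 ^ (1 - r) * ∫ x, ‖u x - v x‖ ^ (r + 1) ∂μ ≤
      ∫ x, ⟪‖u x‖ ^ (r - 1) • u x - ‖v x‖ ^ (r - 1) • v x, u x - v x⟫ ∂μ := by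
  rw [← integral_const_mul]
  exact integral_mono (((hu.sub hv).integrable_norm_rpow_of_ofReal (by linarith)).const_mul _)
    (integrable_inner_rpow_smul_sub hr hu hv)
    fun x => two_rpow_one_sub_mul_norm_sub_rpow_le_inner hr (u x) (v x)

end MeasureTheory

theorem forchheimer_integral_strong_monotonicity_general
    (d : ℕ) (O : Set (EuclideanSpace ℝ (Fin d)))
    (r : ℝ) (hr : 1 ≤ r)
    (u v : EuclideanSpace ℝ (Fin d) → EuclideanSpace ℝ (Fin d))
    (hu : MemLp u (ENNReal.ofReal (r + 1)) (volume.restrict O))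
    (hv : MemLp v (ENNReal.ofReal (r + 1)) (volume.restrict O)) :
    (∫ x in O, ⟪‖u x‖ ^ (r - 1) • u x - ‖v x‖ ^ (r - 1) • v x, u x - v x⟫) ≥
      (1 / 2 ^ (r - 1)) *
        ((∫ x in O, ‖u x - v x‖ ^ (r + 1)) ^ (1 / (r + 1))) ^ (r + 1) := by
  have hnonneg : 0 ≤ ∫ x in O, ‖u x - v x‖ ^ (r + 1) := integral_nonneg fun x => by positivity
  rw [one_div, one_div, Real.rpow_inv_rpow hnonneg (by linarith), ← Real.rpow_neg zero_le_two,
    neg_sub]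
  exact two_rpow_one_sub_mul_integral_le_integral_inner hr hu hv

/-- Integrated strong monotonicity inequality for the Forchheimer nonlinearity on a
measurable set `O`, for `u, v ∈ L^{r+1}(O; ℝ^d)`. -/
theorem forchheimer_integral_strong_monotonicity
    (d : ℕ) (O : Set (EuclideanSpace ℝ (Fin d))) (hO : MeasurableSet O)
    (r : ℝ) (hr : 1 ≤ r)
    (u v : EuclideanSpace ℝ (Fin d) → EuclideanSpace ℝ (Fin d))
    (hu : MemLp u (ENNReal.ofReal (r + 1)) (volume.restrict O))
    (hv : MemLp v (ENNReal.ofReal (r + 1)) (volume.restrict O)) :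
    (∫ x in O, ⟪‖u x‖ ^ (r - 1) • u x - ‖v x‖ ^ (r - 1) • v x, u x - v x⟫) ≥
      (1 / 2 ^ (r - 1)) *
        ((∫ x in O, ‖u x - v x‖ ^ (r + 1)) ^ (1 / (r + 1))) ^ (r + 1) :=
  forchheimer_integral_strong_monotonicity_general d O r hr u v hu hv
end

section
/- Let O ⊆ ℝ^d be a Lebesgue-measurable set, let r ≥ 1 be a real number, and let u₁, u₂, v ∈ L^{r+1}(O;ℝ^d). Then the function (|u₁|^{r-1}u₁ − |u₂|^{r-1}u₂)·v is integrable on O and | ∫_O (|u₁|^{r-1} u₁ − |u₂|^{r-1} u₂) · v dx | ≤ r (‖u₁‖_{L^{r+1}(O)} + ‖u₂‖_{L^{r+1}(O)})^{r-1} ‖u₁ − u₂‖_{L^{r+1}(O)} ‖v‖_{L^{r+1}(O)}. -/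
/-!
For `‖b‖ ≤ ‖a‖` write `‖a‖^(r-1) a - ‖b‖^(r-1) b = ‖a‖^(r-1) (a - b) + (‖a‖^(r-1) - ‖b‖^(r-1)) b`;
Young's inequality bounds the second term by `(r-1) ‖a‖^(r-1) ‖a - b‖`, so pointwise the integrand
is at most `r A^(r-1) B C` with `A = ‖u₁‖ + ‖u₂‖`, `B = ‖u₁ - u₂‖`, `C = ‖v‖`. Hölder's inequality
with the three exponents `(r+1)/(r-1)`, `r+1`, `r+1` and Minkowski's inequality `‖A‖ ≤ ‖u₁‖ + ‖u₂‖`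
in `L^(r+1)` conclude. The estimate is first proved for lower Lebesgue integrals, where it also
yields integrability.
-/

open scoped RealInnerProductSpace
open MeasureTheory

namespace Real

theorem mul_mul_rpow_sub_one_le {r s t : ℝ} (hr : 1 ≤ r) (hs : 0 ≤ s) (ht : 0 ≤ t) :
    r * t * s ^ (r - 1) ≤ t ^ r + (r - 1) * s ^ r := by
  have hr₀ : r ≠ 0 := by positivity
  have amgm := geom_mean_le_arith_mean2_weighted (w₁ := r⁻¹) (w₂ := 1 - r⁻¹)
    (p₁ := t ^ r) (p₂ := s ^ r) (by positivity) (sub_nonneg.2 (inv_le_one_of_one_le₀ hr))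
    (by positivity) (by positivity) (by ring)
  rw [rpow_rpow_inv ht hr₀, ← rpow_mul hs, mul_sub, mul_one, mul_inv_cancel₀ hr₀] at amgm
  calc r * t * s ^ (r - 1) = r * (t * s ^ (r - 1)) := by ring
    _ ≤ r * (r⁻¹ * t ^ r + (1 - r⁻¹) * s ^ r) := by gcongr
    _ = t ^ r + (r - 1) * s ^ r := by field_simp

theorem rpow_sub_one_sub_rpow_sub_one_mul_le {r s t : ℝ} (hr : 1 ≤ r) (ht : 0 ≤ t) (hs : 0 ≤ s) :
    (s ^ (r - 1) - t ^ (r - 1)) * t ≤ (r - 1) * s ^ (r - 1) * (s - t) := by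
  have hr₀ : r - 1 + 1 ≠ 0 := by linarith
  have ht_pow : t ^ (r - 1) * t = t ^ r := by rw [← rpow_add_one' ht hr₀, sub_add_cancel]
  have hs_pow : s ^ (r - 1) * s = s ^ r := by rw [← rpow_add_one' hs hr₀, sub_add_cancel]
  nlinarith [mul_mul_rpow_sub_one_le hr hs ht]

end Real

section PowerNonlinearity

variable {E : Type*} [NormedAddCommGroup E] [NormedSpace ℝ E] {r : ℝ}

theorem norm_rpow_smul_sub_rpow_smul_le_of_norm_le (hr : 1 ≤ r) {a b : E} (hba : ‖b‖ ≤ ‖a‖) :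
    ‖‖a‖ ^ (r - 1) • a - ‖b‖ ^ (r - 1) • b‖ ≤ r * ‖a‖ ^ (r - 1) * ‖a - b‖ := by
  have hpow : ‖b‖ ^ (r - 1) ≤ ‖a‖ ^ (r - 1) := by gcongr
  have hgap := Real.rpow_sub_one_sub_rpow_sub_one_mul_le hr (norm_nonneg b) (norm_nonneg a)
  have hcoef : 0 ≤ (r - 1) * ‖a‖ ^ (r - 1) := mul_nonneg (by linarith) (by positivity)
  calc ‖‖a‖ ^ (r - 1) • a - ‖b‖ ^ (r - 1) • b‖
      = ‖‖a‖ ^ (r - 1) • (a - b) + (‖a‖ ^ (r - 1) - ‖b‖ ^ (r - 1)) • b‖ := by congr 1; module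
    _ ≤ ‖a‖ ^ (r - 1) * ‖a - b‖ + (‖a‖ ^ (r - 1) - ‖b‖ ^ (r - 1)) * ‖b‖ := by
      refine (norm_add_le _ _).trans_eq ?_
      rw [norm_smul_of_nonneg (by positivity), norm_smul_of_nonneg (sub_nonneg.2 hpow)]
    _ ≤ ‖a‖ ^ (r - 1) * ‖a - b‖ + (r - 1) * ‖a‖ ^ (r - 1) * ‖a - b‖ := by
      linarith [mul_le_mul_of_nonneg_left (norm_sub_norm_le a b) hcoef]
    _ = r * ‖a‖ ^ (r - 1) * ‖a - b‖ := by ring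

theorem norm_rpow_smul_sub_rpow_smul_le (hr : 1 ≤ r) (a b : E) :
    ‖‖a‖ ^ (r - 1) • a - ‖b‖ ^ (r - 1) • b‖ ≤ r * (‖a‖ + ‖b‖) ^ (r - 1) * ‖a - b‖ := by
  rcases le_total ‖b‖ ‖a‖ with hba | hab
  · refine (norm_rpow_smul_sub_rpow_smul_le_of_norm_le hr hba).trans ?_
    gcongr
    exact le_add_of_nonneg_right (norm_nonneg b)
  · rw [norm_sub_rev, norm_sub_rev a]
    refine (norm_rpow_smul_sub_rpow_smul_le_of_norm_le hr hab).trans ?_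
    gcongr
    exact le_add_of_nonneg_left (norm_nonneg a)

end PowerNonlinearity

namespace MeasureTheory

variable {α : Type*} [MeasurableSpace α] {μ : Measure α}

section Holder

variable {ε₁ ε₂ ε₃ : Type*} [TopologicalSpace ε₁] [ContinuousENorm ε₁]
  [TopologicalSpace ε₂] [ContinuousENorm ε₂] [TopologicalSpace ε₃] [ContinuousENorm ε₃]

/-- Hölder's inequality with the exponents `(s + 2) / s`, `s + 2`, `s + 2`; the weight `s / (s + 2)`
of `f` may vanish, so `s = 0` needs no separate treatment. -/
theorem lintegral_enorm_rpow_mul_enorm_mul_enorm_le {s : ℝ} (hs : 0 ≤ s)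
    {f : α → ε₁} {g : α → ε₂} {h : α → ε₃} (hf : AEStronglyMeasurable f μ)
    (hg : AEStronglyMeasurable g μ) (hh : AEStronglyMeasurable h μ) :
    ∫⁻ x, ‖f x‖ₑ ^ s * ‖g x‖ₑ * ‖h x‖ₑ ∂μ ≤
      eLpNorm f (.ofReal (s + 2)) μ ^ s * eLpNorm g (.ofReal (s + 2)) μ *
        eLpNorm h (.ofReal (s + 2)) μ := by
  set q := s + 2
  have hq : 0 < q := by positivity
  have hp : ENNReal.ofReal q ≠ 0 := by simpa using hq
  have holder := ENNReal.lintegral_prod_norm_pow_le (μ := μ) Finset.univ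
    (f := ![fun x => ‖f x‖ₑ ^ q, fun x => ‖g x‖ₑ ^ q, fun x => ‖h x‖ₑ ^ q])
    (p := ![s / q, 1 / q, 1 / q])
    (by simpa [Fin.forall_fin_succ] using
      ⟨hf.enorm.pow_const q, hg.enorm.pow_const q, hh.enorm.pow_const q⟩)
    (by simp only [Fin.sum_univ_three, Matrix.cons_val_zero, Matrix.cons_val_one,
          Matrix.cons_val_two, Matrix.head_cons, Matrix.tail_cons]
        field_simp
        ring)
    (by simpa [Fin.forall_fin_succ] using ⟨by positivity, hq.le⟩)
  simp only [Fin.prod_univ_three, Matrix.cons_val_zero, Matrix.cons_val_one, Matrix.cons_val_two,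
    Matrix.head_cons, Matrix.tail_cons, ← ENNReal.rpow_mul] at holder
  simp only [show q * (s / q) = s by field_simp, show q * (1 / q) = 1 by field_simp,
    ENNReal.rpow_one] at holder
  simp only [eLpNorm_eq_lintegral_rpow_enorm_toReal hp ENNReal.ofReal_ne_top,
    ENNReal.toReal_ofReal hq.le, ← ENNReal.rpow_mul]
  convert holder using 3
  field_simp

end Holder

theorem MemLp.eLpNorm_ofReal_eq {F : Type*} [NormedAddCommGroup F] {q : ℝ} (hq : 0 < q)
    {f : α → F} (hf : MemLp f (.ofReal q) μ) :
    eLpNorm f (.ofReal q) μ = .ofReal ((∫ x, ‖f x‖ ^ q ∂μ) ^ (1 / q)) := by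
  rw [hf.eLpNorm_eq_integral_rpow_norm (by simpa using hq) ENNReal.ofReal_ne_top,
    ENNReal.toReal_ofReal hq.le, one_div]

variable {E : Type*} [NormedAddCommGroup E] [InnerProductSpace ℝ E] {r : ℝ}

theorem lintegral_enorm_inner_rpow_smul_sub_le (hr : 1 ≤ r) {u₁ u₂ v : α → E}
    (hu₁ : AEStronglyMeasurable u₁ μ) (hu₂ : AEStronglyMeasurable u₂ μ)
    (hv : AEStronglyMeasurable v μ) :
    ∫⁻ x, ‖⟪‖u₁ x‖ ^ (r - 1) • u₁ x - ‖u₂ x‖ ^ (r - 1) • u₂ x, v x⟫‖ₑ ∂μ ≤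
      .ofReal r * (eLpNorm u₁ (.ofReal (r + 1)) μ + eLpNorm u₂ (.ofReal (r + 1)) μ) ^ (r - 1) *
        eLpNorm (u₁ - u₂) (.ofReal (r + 1)) μ * eLpNorm v (.ofReal (r + 1)) μ := by
  set p := ENNReal.ofReal (r + 1)
  set A : α → ℝ := fun x => ‖u₁ x‖ + ‖u₂ x‖
  have hpointwise : ∀ x, ‖⟪‖u₁ x‖ ^ (r - 1) • u₁ x - ‖u₂ x‖ ^ (r - 1) • u₂ x, v x⟫‖ₑ ≤
      .ofReal r * (‖A x‖ₑ ^ (r - 1) * ‖(u₁ - u₂) x‖ₑ * ‖v x‖ₑ) := by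
    intro x
    have hA : 0 ≤ A x := by positivity
    have hreal := (norm_inner_le_norm (𝕜 := ℝ) _ (v x)).trans
      (mul_le_mul_of_nonneg_right (norm_rpow_smul_sub_rpow_smul_le hr (u₁ x) (u₂ x))
        (norm_nonneg (v x)))
    rw [← ofReal_norm, Real.enorm_of_nonneg hA, ENNReal.ofReal_rpow_of_nonneg hA (by linarith),
      Pi.sub_apply, ← ofReal_norm, ← ofReal_norm, ← ENNReal.ofReal_mul (by positivity),
      ← ENNReal.ofReal_mul (by positivity), ← ENNReal.ofReal_mul (by linarith)]
    exact ENNReal.ofReal_le_ofReal (by simpa only [mul_assoc] using hreal)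
  have hminkowski : eLpNorm A p μ ≤ eLpNorm u₁ p μ + eLpNorm u₂ p μ := by
    rw [← eLpNorm_norm u₁, ← eLpNorm_norm u₂]
    exact eLpNorm_add_le hu₁.norm hu₂.norm (by simp [p]; linarith)
  have hholder := lintegral_enorm_rpow_mul_enorm_mul_enorm_le (sub_nonneg.2 hr)
    (hu₁.norm.add hu₂.norm) (hu₁.sub hu₂) hv (μ := μ)
  rw [show r - 1 + 2 = r + 1 by ring] at hholder
  calc _ ≤ ∫⁻ x, .ofReal r * (‖A x‖ₑ ^ (r - 1) * ‖(u₁ - u₂) x‖ₑ * ‖v x‖ₑ) ∂μ :=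
        lintegral_mono hpointwise
    _ = .ofReal r * ∫⁻ x, ‖A x‖ₑ ^ (r - 1) * ‖(u₁ - u₂) x‖ₑ * ‖v x‖ₑ ∂μ :=
        lintegral_const_mul' _ _ ENNReal.ofReal_ne_top
    _ ≤ .ofReal r * (eLpNorm A p μ ^ (r - 1) * eLpNorm (u₁ - u₂) p μ * eLpNorm v p μ) := by
        gcongr
        exact hholder
    _ ≤ .ofReal r * ((eLpNorm u₁ p μ + eLpNorm u₂ p μ) ^ (r - 1) * eLpNorm (u₁ - u₂) p μ *
          eLpNorm v p μ) := by
        gcongr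
    _ = _ := by simp only [mul_assoc]

end MeasureTheory
theorem forchheimer_form_lipschitz_general
    (d : ℕ) (O : Set (EuclideanSpace ℝ (Fin d)))
    (r : ℝ) (hr : 1 ≤ r)
    (u₁ u₂ v : EuclideanSpace ℝ (Fin d) → EuclideanSpace ℝ (Fin d))
    (hu₁ : MemLp u₁ (ENNReal.ofReal (r + 1)) (volume.restrict O))
    (hu₂ : MemLp u₂ (ENNReal.ofReal (r + 1)) (volume.restrict O))
    (hv : MemLp v (ENNReal.ofReal (r + 1)) (volume.restrict O)) :
    IntegrableOn
      (fun x => ⟪‖u₁ x‖ ^ (r - 1) • u₁ x - ‖u₂ x‖ ^ (r - 1) • u₂ x, v x⟫) O ∧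
    |∫ x in O, ⟪‖u₁ x‖ ^ (r - 1) • u₁ x - ‖u₂ x‖ ^ (r - 1) • u₂ x, v x⟫| ≤
      r * ((∫ x in O, ‖u₁ x‖ ^ (r + 1)) ^ (1 / (r + 1)) +
            (∫ x in O, ‖u₂ x‖ ^ (r + 1)) ^ (1 / (r + 1))) ^ (r - 1) *
        (∫ x in O, ‖u₁ x - u₂ x‖ ^ (r + 1)) ^ (1 / (r + 1)) *
        (∫ x in O, ‖v x‖ ^ (r + 1)) ^ (1 / (r + 1)) := by
  have hr₀ : 0 < r + 1 := by linarith
  have hbound := lintegral_enorm_inner_rpow_smul_sub_le hr hu₁.1 hu₂.1 hv.1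
  rw [hu₁.eLpNorm_ofReal_eq hr₀, hu₂.eLpNorm_ofReal_eq hr₀, (hu₁.sub hu₂).eLpNorm_ofReal_eq hr₀,
    hv.eLpNorm_ofReal_eq hr₀, ← ENNReal.ofReal_add (by positivity) (by positivity),
    ENNReal.ofReal_rpow_of_nonneg (by positivity) (by linarith),
    ← ENNReal.ofReal_mul (by linarith), ← ENNReal.ofReal_mul (by positivity),
    ← ENNReal.ofReal_mul (by positivity)] at hbound
  have hmeas : AEStronglyMeasurable
      (fun x => ⟪‖u₁ x‖ ^ (r - 1) • u₁ x - ‖u₂ x‖ ^ (r - 1) • u₂ x, v x⟫) (volume.restrict O) := by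
    have := hu₁.1.aemeasurable
    have := hu₂.1.aemeasurable
    have := hv.1.aemeasurable
    fun_prop
  refine ⟨⟨hmeas, hbound.trans_lt ENNReal.ofReal_lt_top⟩, ?_⟩
  rw [← Real.norm_eq_abs, ← ENNReal.ofReal_le_ofReal_iff (by positivity), ofReal_norm]
  exact (enorm_integral_le_lintegral_enorm _).trans hbound

/-- Local Lipschitz estimate for the Forchheimer form: for `u₁, u₂, v ∈ L^{r+1}(O;ℝ^d)`,
`|∫_O (|u₁|^{r-1}u₁ − |u₂|^{r-1}u₂)·v| ≤ r (‖u₁‖ + ‖u₂‖)^{r-1} ‖u₁ − u₂‖ ‖v‖`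
in `L^{r+1}(O)` norms. -/
theorem forchheimer_form_lipschitz
    (d : ℕ) (O : Set (EuclideanSpace ℝ (Fin d))) (hO : MeasurableSet O)
    (r : ℝ) (hr : 1 ≤ r)
    (u₁ u₂ v : EuclideanSpace ℝ (Fin d) → EuclideanSpace ℝ (Fin d))
    (hu₁ : MemLp u₁ (ENNReal.ofReal (r + 1)) (volume.restrict O))
    (hu₂ : MemLp u₂ (ENNReal.ofReal (r + 1)) (volume.restrict O))
    (hv : MemLp v (ENNReal.ofReal (r + 1)) (volume.restrict O)) :
    IntegrableOn
      (fun x => ⟪‖u₁ x‖ ^ (r - 1) • u₁ x - ‖u₂ x‖ ^ (r - 1) • u₂ x, v x⟫) O ∧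
    |∫ x in O, ⟪‖u₁ x‖ ^ (r - 1) • u₁ x - ‖u₂ x‖ ^ (r - 1) • u₂ x, v x⟫| ≤
      r * ((∫ x in O, ‖u₁ x‖ ^ (r + 1)) ^ (1 / (r + 1)) +
            (∫ x in O, ‖u₂ x‖ ^ (r + 1)) ^ (1 / (r + 1))) ^ (r - 1) *
        (∫ x in O, ‖u₁ x - u₂ x‖ ^ (r + 1)) ^ (1 / (r + 1)) *
        (∫ x in O, ‖v x‖ ^ (r + 1)) ^ (1 / (r + 1)) :=
  forchheimer_form_lipschitz_general d O r hr u₁ u₂ v hu₁ hu₂ hv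
end
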